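/- In the ℤ₂ lattice setting, assume hypotheses (a) and (c). Let 𝟙 ∈ ℋ be the constant function 1 (the state |+⟩^{⊗L}) and define ψ_p = ( ∏_{p∈P} (id + Z_p) ) 𝟙. Then ψ_p ≠ 0, and ψ_p is a simultaneous eigenvector: Z_p ψ_p = ψ_p for every p ∈ P and X_v ψ_p = ψ_p for every v ∈ V. -/

import Mathlib

/-!
In the basis of states `x : L → ZMod 2` every `Z_a` is diagonal with eigenvalue
`(-1)^{a ⬝ᵥ x} = ±1`, so `ψ(x) = ∏_p (1 + (-1)^{∂p ⬝ᵥ x})`. At `x = 0` this is `2^|P| ≠ 0`.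
Multiplying by the sign of `∂p` fixes the `p`-th factor since `s (1 + s) = 1 + s` for `s = ±1`,
and shifting `x` by `δv` changes no sign because `∂p ⬝ᵥ δv = 0`.
-/

noncomputable section

variable {L : Type*} [Fintype L]

/-- The Hilbert space of the ℤ₂ lattice model. -/
abbrev HSp (L : Type*) : Type _ := (L → ZMod 2) → ℂ

/-- The diagonal (plaquette-type) operator `(Z_a f)(x) = (−1)^{∑ a(l)·x(l)} f(x)`. -/
def Zop (a : L → ZMod 2) : HSp L →ₗ[ℂ] HSp L where
  toFun f := fun x => (-1 : ℂ) ^ (∑ l, a l * x l : ZMod 2).val * f x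
  map_add' _f _g := by funext x; simp [mul_add]
  map_smul' _c _f := by funext x; simp [smul_eq_mul]; ring

/-- The shift (vertex-type) operator `(X_a f)(x) = f(x + a)`. -/
def Xop (a : L → ZMod 2) : HSp L →ₗ[ℂ] HSp L where
  toFun f := fun x => f (x + a)
  map_add' _f _g := rfl
  map_smul' _c _f := rfl

lemma Zop_comm (a b : L → ZMod 2) :
    Commute ((1 : Module.End ℂ (HSp L)) + Zop a) (1 + Zop b) := by
  have h : Commute (Zop a : Module.End ℂ (HSp L)) (Zop b) := by
    apply LinearMap.ext; intro f; funext x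
    show (-1 : ℂ) ^ (∑ l, a l * x l : ZMod 2).val *
        ((-1 : ℂ) ^ (∑ l, b l * x l : ZMod 2).val * f x) = _
    show _ = (-1 : ℂ) ^ (∑ l, b l * x l : ZMod 2).val *
        ((-1 : ℂ) ^ (∑ l, a l * x l : ZMod 2).val * f x)
    ring
  exact (Commute.one_left _).add_left ((Commute.one_right _).add_right h)

open Matrix

def zSign (a x : L → ZMod 2) : ℂ := (-1) ^ (a ⬝ᵥ x).val

lemma zSign_mul_self (a x : L → ZMod 2) : zSign a x * zSign a x = 1 := by
  rw [zSign, ← mul_pow]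
  norm_num

lemma zSign_zero_right (a : L → ZMod 2) : zSign a 0 = 1 := by
  rw [zSign, dotProduct_zero, ZMod.val_zero, pow_zero]

lemma zSign_add_right_of_dotProduct_eq_zero {a y : L → ZMod 2} (h : a ⬝ᵥ y = 0)
    (x : L → ZMod 2) : zSign a (x + y) = zSign a x := by
  rw [zSign, zSign, dotProduct_add, h, add_zero]

lemma Zop_apply (a : L → ZMod 2) (f : HSp L) (x : L → ZMod 2) :
    Zop a f x = zSign a x * f x :=
  rfl

lemma noncommProd_one_add_Zop_apply {P : Type*} (a : P → L → ZMod 2) (S : Finset P)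
    (f : HSp L) (x : L → ZMod 2) :
    S.noncommProd (fun p => (1 : Module.End ℂ (HSp L)) + Zop (a p))
        (fun p _ q _ _ => Zop_comm (a p) (a q)) f x =
      (∏ p ∈ S, (1 + zSign (a p) x)) * f x := by
  classical
  induction S using Finset.induction_on generalizing f with
  | empty =>
    erw [Finset.noncommProd_empty]
    exact (one_mul _).symm
  | insert p S hp ih =>
    erw [Finset.noncommProd_insert_of_notMem _ _ _ _ hp]
    rw [Module.End.mul_apply, LinearMap.add_apply, Module.End.one_apply, Pi.add_apply,
      Zop_apply, ih, Finset.prod_insert hp]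
    ring

lemma zSign_mul_prod_one_add_zSign {P : Type*} (a : P → L → ZMod 2) {S : Finset P} {p : P}
    (hp : p ∈ S) (x : L → ZMod 2) :
    zSign (a p) x * ∏ q ∈ S, (1 + zSign (a q) x) = ∏ q ∈ S, (1 + zSign (a q) x) := by
  classical
  rw [← Finset.mul_prod_erase S _ hp, ← mul_assoc, mul_add, mul_one, zSign_mul_self, add_comm]

theorem plaquette_ground_state
    {L P V : Type*} [Fintype L] [Fintype P]
    (bd : P → (L → ZMod 2)) (dl : V → (L → ZMod 2))
    (hc : ∀ (p : P) (v : V), (∑ l, bd p l * dl v l) = (0 : ZMod 2)) :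
    (Finset.univ.noncommProd (fun p : P => (1 : Module.End ℂ (HSp L)) + Zop (bd p))
        (fun p _ q _ _ => Zop_comm (bd p) (bd q))) (fun _ => (1 : ℂ)) ≠ 0 ∧
    (∀ p : P,
      Zop (bd p) ((Finset.univ.noncommProd
          (fun p : P => (1 : Module.End ℂ (HSp L)) + Zop (bd p))
          (fun p _ q _ _ => Zop_comm (bd p) (bd q))) (fun _ => (1 : ℂ))) =
        (Finset.univ.noncommProd (fun p : P => (1 : Module.End ℂ (HSp L)) + Zop (bd p))
          (fun p _ q _ _ => Zop_comm (bd p) (bd q))) (fun _ => (1 : ℂ))) ∧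
    (∀ v : V,
      Xop (dl v) ((Finset.univ.noncommProd
          (fun p : P => (1 : Module.End ℂ (HSp L)) + Zop (bd p))
          (fun p _ q _ _ => Zop_comm (bd p) (bd q))) (fun _ => (1 : ℂ))) =
        (Finset.univ.noncommProd (fun p : P => (1 : Module.End ℂ (HSp L)) + Zop (bd p))
          (fun p _ q _ _ => Zop_comm (bd p) (bd q))) (fun _ => (1 : ℂ))) := by
  set ψ := (Finset.univ.noncommProd (fun p : P => (1 : Module.End ℂ (HSp L)) + Zop (bd p))
    (fun p _ q _ _ => Zop_comm (bd p) (bd q))) (fun _ => (1 : ℂ))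
  have hψ (x : L → ZMod 2) : ψ x = ∏ p, (1 + zSign (bd p) x) :=
    (noncommProd_one_add_Zop_apply bd _ _ x).trans (mul_one _)
  refine ⟨fun hψ0 => ?_, fun p => funext fun x => ?_, fun v => funext fun x => ?_⟩
  · have h := congrFun hψ0 0
    rw [hψ, Pi.zero_apply] at h
    simp [zSign_zero_right] at h
  · rw [Zop_apply, hψ]
    exact zSign_mul_prod_one_add_zSign bd (Finset.mem_univ p) x
  · show ψ (x + dl v) = ψ x
    rw [hψ, hψ]
    exact Finset.prod_congr rfl fun q _ => by
      rw [zSign_add_right_of_dotProduct_eq_zero (hc q v)]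

end
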